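/- arXiv:2510.16298 — 3 statements merged into one kernel-verified Lean document; each statement's English description precedes it below -/
import Mathlib

section
/- Double robustness in the propensity direction: if the outcome regressions are correctly specified (η2 = η2*, η1 = η1*) but the propensity models π1, π2 are arbitrary measurable functions bounded away from 0, then E[S1 + S2] = 0, where S2 = d(A1,A2)/(π1(A1,Z1)π2(A1,A2,Z1,Z2)) (Y − η2*(A1,A2,Z1,Z2)) and S1 = Σ_{a2} d(A1,a2)/π1(A1,Z1) (η2*(A1,a2,Z1,Z2) − η1*(A1,a2,Z1)). -/
/-!
The two residuals are conditionally centred given the information their weights depend on: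
`E[1{A1 = b1} (η2* - η1*) | Z1] = 0` by the definition of `η1*`, and
`E[1{A1 = b1, A2 = b2} (Y - η2*) | Z1, Z2] = 0` by that of `η2*`. The working propensities enter
only through the weights `d / π1` and `d / (π1 π2)`, which are bounded and measurable with respect
to these σ-algebras, so they pull out of the conditional expectations and every term of the score
has mean zero, whatever `π1, π2` are.
-/

open MeasureTheory Filter

noncomputable def ind {Ω : Type*} (A : Ω → Bool) (a : Bool) : Ω → ℝ :=
  fun ω => if A ω = a then 1 else 0

section Indicator

variable {Ω : Type*}

theorem measurable_ind [MeasurableSpace Ω] {A : Ω → Bool} (hA : Measurable A) (b : Bool) :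
    Measurable (ind A b) :=
  Measurable.ite (hA (measurableSet_singleton b)) measurable_const measurable_const

theorem abs_ind_le_one (A : Ω → Bool) (b : Bool) (ω : Ω) : |ind A b ω| ≤ 1 := by
  unfold ind; split <;> simp

theorem abs_ind_mul_ind_le_one (A A' : Ω → Bool) (b b' : Bool) (ω : Ω) :
    |ind A b ω * ind A' b' ω| ≤ 1 := by
  rw [abs_mul]
  exact mul_le_one₀ (abs_ind_le_one A b ω) (abs_nonneg _) (abs_ind_le_one A' b' ω)

theorem sum_weighted_eq_sum_ind (A1 A2 : Ω → Bool) (w1 r1 w2 r2 : Bool → Bool → Ω → ℝ) (ω : Ω) :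
    (∑ b2, w1 (A1 ω) b2 ω * r1 (A1 ω) b2 ω) + w2 (A1 ω) (A2 ω) ω * r2 (A1 ω) (A2 ω) ω =
      ∑ p : Bool × Bool, (w1 p.1 p.2 ω * (ind A1 p.1 ω * r1 p.1 p.2 ω) +
        w2 p.1 p.2 ω * (ind A1 p.1 ω * ind A2 p.2 ω * r2 p.1 p.2 ω)) := by
  cases h1 : A1 ω <;> cases h2 : A2 ω <;>
    simp [ind, h1, h2, Fintype.sum_prod_type] <;> ring

end Indicator

theorem abs_div_le_abs_div_of_le {c x δ : ℝ} (hδ : 0 < δ) (hx : δ ≤ x) : |c / x| ≤ |c| / δ := by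
  rw [abs_div, abs_of_pos (hδ.trans_le hx)]
  exact div_le_div_of_nonneg_left (abs_nonneg c) hδ hx

section CondExp

variable {Ω : Type*} {m m0 : MeasurableSpace Ω} {μ : Measure Ω}

/-- `hreg` says that `e` regresses `f` on `m` within the event weighted by `q`, written without
division as `E[q | m] e = E[q f | m]`. -/
theorem condExp_mul_sub_eq_zero [IsFiniteMeasure μ] {q f e P : Ω → ℝ}
    (hq : AEStronglyMeasurable q μ) (hq_le : ∀ ω, |q ω| ≤ 1) (hf : Integrable f μ)
    (he : StronglyMeasurable[m] e) (he_int : Integrable e μ) (hP : P =ᵐ[μ] μ[q|m])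
    (hreg : (fun ω => P ω * e ω) =ᵐ[μ] μ[fun ω => q ω * f ω|m]) :
    μ[fun ω => q ω * (f ω - e ω)|m] =ᵐ[μ] 0 := by
  have hqf : Integrable (fun ω => q ω * f ω) μ := hf.bdd_mul hq (ae_of_all _ hq_le)
  have hqe : Integrable (e * q) μ := he_int.mul_bdd hq (ae_of_all _ hq_le)
  have hpull : μ[e * q|m] =ᵐ[μ] e * μ[q|m] :=
    condExp_mul_of_stronglyMeasurable_left he hqe (.of_bound hq 1 (ae_of_all _ hq_le))
  have hsplit : (fun ω => q ω * (f ω - e ω)) = (fun ω => q ω * f ω) - e * q := by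
    funext ω; simp [mul_sub, mul_comm]
  rw [hsplit]
  filter_upwards [condExp_sub hqf hqe m, hreg, hpull, hP] with ω h h1 h2 h3
  rw [h, Pi.sub_apply, ← h1, h2, Pi.mul_apply, ← h3, Pi.zero_apply]
  ring

theorem integral_mul_eq_zero_of_condExp_eq_zero [IsFiniteMeasure μ] (hm : m ≤ m0) {w g : Ω → ℝ}
    (hw : StronglyMeasurable[m] w) (hwg : Integrable (fun ω => w ω * g ω) μ)
    (hg : Integrable g μ) (h0 : μ[g|m] =ᵐ[μ] 0) :
    ∫ ω, w ω * g ω ∂μ = 0 := by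
  have hpull : μ[fun ω => w ω * g ω|m] =ᵐ[μ] 0 := by
    filter_upwards [condExp_mul_of_stronglyMeasurable_left hw hwg hg, h0] with ω h h'
    simp only [← Pi.mul_def, h, Pi.mul_apply, h', Pi.zero_apply, mul_zero]
  rw [← integral_condExp hm, integral_congr_ae hpull]
  exact integral_zero Ω ℝ

end CondExp

theorem integral_weighted_residuals_eq_zero {Ω : Type*} {m1 m2 m0 : MeasurableSpace Ω}
    {μ : Measure Ω} [IsFiniteMeasure μ] (hm1 : m1 ≤ m0) (hm2 : m2 ≤ m0)
    {A1 A2 : Ω → Bool} (hA1 : Measurable A1) (hA2 : Measurable A2)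
    {w1 r1 w2 r2 : Bool → Bool → Ω → ℝ}
    (hw1 : ∀ b1 b2, StronglyMeasurable[m1] (w1 b1 b2))
    (hw1_bdd : ∀ b1 b2, ∃ B, ∀ ω, |w1 b1 b2 ω| ≤ B)
    (hw2 : ∀ b1 b2, StronglyMeasurable[m2] (w2 b1 b2))
    (hw2_bdd : ∀ b1 b2, ∃ B, ∀ ω, |w2 b1 b2 ω| ≤ B)
    (hr1 : ∀ b1 b2, Integrable (r1 b1 b2) μ) (hr2 : ∀ b1 b2, Integrable (r2 b1 b2) μ)
    (hc1 : ∀ b1 b2, μ[fun ω => ind A1 b1 ω * r1 b1 b2 ω|m1] =ᵐ[μ] 0)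
    (hc2 : ∀ b1 b2, μ[fun ω => ind A1 b1 ω * ind A2 b2 ω * r2 b1 b2 ω|m2] =ᵐ[μ] 0) :
    ∫ ω, (∑ b2, w1 (A1 ω) b2 ω * r1 (A1 ω) b2 ω) + w2 (A1 ω) (A2 ω) ω * r2 (A1 ω) (A2 ω) ω ∂μ
      = 0 := by
  have hcentred : ∀ {m : MeasurableSpace Ω}, m ≤ m0 → ∀ {w g : Ω → ℝ}, StronglyMeasurable[m] w →
      (∃ B, ∀ ω, |w ω| ≤ B) → Integrable g μ → μ[g|m] =ᵐ[μ] 0 →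
      Integrable (fun ω => w ω * g ω) μ ∧ ∫ ω, w ω * g ω ∂μ = 0 := by
    intro m hm w g hw ⟨B, hB⟩ hg h0
    have hwg : Integrable (fun ω => w ω * g ω) μ :=
      hg.bdd_mul (hw.mono hm).aestronglyMeasurable (ae_of_all _ hB)
    exact ⟨hwg, integral_mul_eq_zero_of_condExp_eq_zero hm hw hwg hg h0⟩
  have hS1 : ∀ b1 b2, _ := fun b1 b2 => hcentred hm1 (hw1 b1 b2) (hw1_bdd b1 b2)
    ((hr1 b1 b2).bdd_mul (measurable_ind hA1 b1).aestronglyMeasurable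
      (ae_of_all _ (abs_ind_le_one A1 b1))) (hc1 b1 b2)
  have hS2 : ∀ b1 b2, _ := fun b1 b2 => hcentred hm2 (hw2 b1 b2) (hw2_bdd b1 b2)
    ((hr2 b1 b2).bdd_mul (f := fun ω => ind A1 b1 ω * ind A2 b2 ω)
      ((measurable_ind hA1 b1).mul (measurable_ind hA2 b2)).aestronglyMeasurable
      (ae_of_all _ (abs_ind_mul_ind_le_one A1 A2 b1 b2))) (hc2 b1 b2)
  simp_rw [sum_weighted_eq_sum_ind A1 A2 w1 r1 w2 r2]
  rw [integral_finsetSum _ fun p _ => (hS1 p.1 p.2).1.add (hS2 p.1 p.2).1]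
  refine Finset.sum_eq_zero fun p _ => ?_
  rw [integral_add (hS1 p.1 p.2).1 (hS2 p.1 p.2).1, (hS1 p.1 p.2).2, (hS2 p.1 p.2).2, add_zero]

theorem dr_robust_propensity_direction_general
    {Ω 𝒵₁ 𝒵₂ : Type*} [MeasurableSpace Ω]
    [MeasurableSpace 𝒵₁] [MeasurableSpace 𝒵₂]
    (μ : Measure Ω) [IsProbabilityMeasure μ]
    (Z1 : Ω → 𝒵₁) (Z2 : Ω → 𝒵₂) (A1 A2 : Ω → Bool) (Y : Ω → ℝ)
    (hZ1 : Measurable Z1) (hZ2 : Measurable Z2)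
    (hA1 : Measurable A1) (hA2 : Measurable A2)
    (hYint : Integrable Y μ)
    (d : Bool → Bool → ℝ)
    -- true propensity scores: π1s b1 = P(A1=b1|Z1), π2s b1 b2 = P(A2=b2|A1=b1,Z1,Z2),
    -- πJ b1 = P(A1=b1|Z1,Z2)
    (π1s πJ : Bool → Ω → ℝ) (π2s : Bool → Bool → Ω → ℝ) 
    (hπ1s : ∀ b1, π1s b1 =ᵐ[μ] μ[ind A1 b1 | MeasurableSpace.comap Z1 inferInstance])
    (hπ2s : ∀ b1 b2, (fun ω => πJ b1 ω * π2s b1 b2 ω) =ᵐ[μ]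
      μ[fun ω => ind A1 b1 ω * ind A2 b2 ω |
        MeasurableSpace.comap (fun ω => (Z1 ω, Z2 ω)) inferInstance])
    -- true outcome regression η2s b1 b2 = E[Y | A1=b1, A2=b2, Z1, Z2]:
    (η2s : Bool → Bool → Ω → ℝ)
    (hη2meas : ∀ b1 b2,
      Measurable[MeasurableSpace.comap (fun ω => (Z1 ω, Z2 ω)) inferInstance] (η2s b1 b2))
    (hη2 : ∀ b1 b2, (fun ω => πJ b1 ω * π2s b1 b2 ω * η2s b1 b2 ω) =ᵐ[μ]
      μ[fun ω => ind A1 b1 ω * ind A2 b2 ω * Y ω |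
        MeasurableSpace.comap (fun ω => (Z1 ω, Z2 ω)) inferInstance])
    -- true iterated mean η1s b1 b2 = E[η2s b1 b2 | A1=b1, Z1]:
    (η1s : Bool → Bool → Ω → ℝ)
    (hη1meas : ∀ b1 b2, Measurable[MeasurableSpace.comap Z1 inferInstance] (η1s b1 b2))
    (hη1 : ∀ b1 b2, (fun ω => π1s b1 ω * η1s b1 b2 ω) =ᵐ[μ]
      μ[fun ω => ind A1 b1 ω * η2s b1 b2 ω | MeasurableSpace.comap Z1 inferInstance])
    (C : ℝ) (hη2bd : ∀ b1 b2 ω, |η2s b1 b2 ω| ≤ C) (hη1bd : ∀ b1 b2 ω, |η1s b1 b2 ω| ≤ C)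
    -- arbitrary working propensity models, bounded in [ε,1]:
    (π1a : Bool → Ω → ℝ) (π2a : Bool → Bool → Ω → ℝ) (ε : ℝ) (hε : 0 < ε)
    (hπ1ameas : ∀ b1, Measurable[MeasurableSpace.comap Z1 inferInstance] (π1a b1))
    (hπ2ameas : ∀ b1 b2,
      Measurable[MeasurableSpace.comap (fun ω => (Z1 ω, Z2 ω)) inferInstance] (π2a b1 b2))
    (hπ1abd : ∀ b1 ω, π1a b1 ω ∈ Set.Icc ε 1)
    (hπ2abd : ∀ b1 b2 ω, π2a b1 b2 ω ∈ Set.Icc ε 1) :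
    ∫ ω, ((∑ b2 : Bool, d (A1 ω) b2 / π1a (A1 ω) ω * (η2s (A1 ω) b2 ω - η1s (A1 ω) b2 ω)) + (d (A1 ω) (A2 ω) / (π1a (A1 ω) ω * π2a (A1 ω) (A2 ω) ω) * (Y ω - η2s (A1 ω) (A2 ω) ω))) ∂μ = 0 := by
  have hm1 := hZ1.comap_le
  have hm2 := (hZ1.prodMk hZ2).comap_le
  have hm12 : MeasurableSpace.comap Z1 inferInstance ≤
      MeasurableSpace.comap (fun ω => (Z1 ω, Z2 ω)) inferInstance :=
    (measurable_fst.comp (comap_measurable (fun ω => (Z1 ω, Z2 ω)))).comap_le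
  have hη2int : ∀ b1 b2, Integrable (η2s b1 b2) μ := fun b1 b2 =>
    .of_bound ((hη2meas b1 b2).mono hm2 le_rfl).aestronglyMeasurable C (ae_of_all _ (hη2bd b1 b2))
  have hη1int : ∀ b1 b2, Integrable (η1s b1 b2) μ := fun b1 b2 =>
    .of_bound ((hη1meas b1 b2).mono hm1 le_rfl).aestronglyMeasurable C (ae_of_all _ (hη1bd b1 b2))
  refine integral_weighted_residuals_eq_zero hm1 hm2 hA1 hA2
    (w1 := fun b1 b2 ω => d b1 b2 / π1a b1 ω)
    (w2 := fun b1 b2 ω => d b1 b2 / (π1a b1 ω * π2a b1 b2 ω))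
    (r1 := fun b1 b2 ω => η2s b1 b2 ω - η1s b1 b2 ω) (r2 := fun b1 b2 ω => Y ω - η2s b1 b2 ω)
    (fun b1 b2 => (measurable_const.div (hπ1ameas b1)).stronglyMeasurable)
    (fun b1 b2 => ⟨|d b1 b2| / ε, fun ω => abs_div_le_abs_div_of_le hε (hπ1abd b1 ω).1⟩)
    (fun b1 b2 => (measurable_const.div
      (((hπ1ameas b1).mono hm12 le_rfl).mul (hπ2ameas b1 b2))).stronglyMeasurable)
    (fun b1 b2 => ⟨|d b1 b2| / (ε * ε), fun ω => abs_div_le_abs_div_of_le (mul_pos hε hε)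
      (mul_le_mul (hπ1abd b1 ω).1 (hπ2abd b1 b2 ω).1 hε.le (hε.le.trans (hπ1abd b1 ω).1))⟩)
    (fun b1 b2 => (hη2int b1 b2).sub (hη1int b1 b2)) (fun b1 b2 => hYint.sub (hη2int b1 b2))
    (fun b1 b2 => ?_) (fun b1 b2 => ?_)
  · exact condExp_mul_sub_eq_zero (measurable_ind hA1 b1).aestronglyMeasurable
      (abs_ind_le_one A1 b1) (hη2int b1 b2) (hη1meas b1 b2).stronglyMeasurable (hη1int b1 b2)
      (hπ1s b1) (hη1 b1 b2)
  · exact condExp_mul_sub_eq_zero (q := fun ω => ind A1 b1 ω * ind A2 b2 ω)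
      ((measurable_ind hA1 b1).mul (measurable_ind hA2 b2)).aestronglyMeasurable
      (abs_ind_mul_ind_le_one A1 A2 b1 b2) hYint (hη2meas b1 b2).stronglyMeasurable
      (hη2int b1 b2) (hπ2s b1 b2) (hη2 b1 b2)

/-- Double robustness in the propensity direction: with correctly specified outcome
regressions `η2* , η1*` but arbitrary measurable propensity models `π1, π2` taking
values in `[ε,1]`, the doubly robust terms satisfy `E[S1 + S2] = 0`. -/
theorem dr_robust_propensity_direction
    {Ω 𝒵₁ 𝒵₂ : Type*} [MeasurableSpace Ω]
    [MeasurableSpace 𝒵₁] [MeasurableSpace 𝒵₂]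
    (μ : Measure Ω) [IsProbabilityMeasure μ]
    (Z1 : Ω → 𝒵₁) (Z2 : Ω → 𝒵₂) (A1 A2 : Ω → Bool) (Y : Ω → ℝ)
    (hZ1 : Measurable Z1) (hZ2 : Measurable Z2)
    (hA1 : Measurable A1) (hA2 : Measurable A2)
    (hYint : Integrable Y μ)
    (d : Bool → Bool → ℝ)
    -- true propensity scores: π1s b1 = P(A1=b1|Z1), π2s b1 b2 = P(A2=b2|A1=b1,Z1,Z2),
    -- πJ b1 = P(A1=b1|Z1,Z2)
    (π1s πJ : Bool → Ω → ℝ) (π2s : Bool → Bool → Ω → ℝ) 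
    (hπ1s : ∀ b1, π1s b1 =ᵐ[μ] μ[ind A1 b1 | MeasurableSpace.comap Z1 inferInstance])
    (hπJ : ∀ b1, πJ b1 =ᵐ[μ]
      μ[ind A1 b1 | MeasurableSpace.comap (fun ω => (Z1 ω, Z2 ω)) inferInstance])
    (hπ2s : ∀ b1 b2, (fun ω => πJ b1 ω * π2s b1 b2 ω) =ᵐ[μ]
      μ[fun ω => ind A1 b1 ω * ind A2 b2 ω |
        MeasurableSpace.comap (fun ω => (Z1 ω, Z2 ω)) inferInstance])
    (hpos1 : ∀ b1, ∀ᵐ ω ∂μ, 0 < π1s b1 ω)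
    (hpos2 : ∀ b1 b2, ∀ᵐ ω ∂μ, 0 < π2s b1 b2 ω)
    (hposJ : ∀ b1, ∀ᵐ ω ∂μ, 0 < πJ b1 ω)
    -- true outcome regression η2s b1 b2 = E[Y | A1=b1, A2=b2, Z1, Z2]:
    (η2s : Bool → Bool → Ω → ℝ)
    (hη2meas : ∀ b1 b2,
      Measurable[MeasurableSpace.comap (fun ω => (Z1 ω, Z2 ω)) inferInstance] (η2s b1 b2))
    (hη2 : ∀ b1 b2, (fun ω => πJ b1 ω * π2s b1 b2 ω * η2s b1 b2 ω) =ᵐ[μ]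
      μ[fun ω => ind A1 b1 ω * ind A2 b2 ω * Y ω |
        MeasurableSpace.comap (fun ω => (Z1 ω, Z2 ω)) inferInstance])
    -- true iterated mean η1s b1 b2 = E[η2s b1 b2 | A1=b1, Z1]:
    (η1s : Bool → Bool → Ω → ℝ)
    (hη1meas : ∀ b1 b2, Measurable[MeasurableSpace.comap Z1 inferInstance] (η1s b1 b2))
    (hη1 : ∀ b1 b2, (fun ω => π1s b1 ω * η1s b1 b2 ω) =ᵐ[μ]
      μ[fun ω => ind A1 b1 ω * η2s b1 b2 ω | MeasurableSpace.comap Z1 inferInstance])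
    (C : ℝ) (hη2bd : ∀ b1 b2 ω, |η2s b1 b2 ω| ≤ C) (hη1bd : ∀ b1 b2 ω, |η1s b1 b2 ω| ≤ C)
    -- arbitrary working propensity models, bounded in [ε,1]:
    (π1a : Bool → Ω → ℝ) (π2a : Bool → Bool → Ω → ℝ) (ε : ℝ) (hε : 0 < ε)
    (hπ1ameas : ∀ b1, Measurable[MeasurableSpace.comap Z1 inferInstance] (π1a b1))
    (hπ2ameas : ∀ b1 b2,
      Measurable[MeasurableSpace.comap (fun ω => (Z1 ω, Z2 ω)) inferInstance] (π2a b1 b2))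
    (hπ1abd : ∀ b1 ω, π1a b1 ω ∈ Set.Icc ε 1)
    (hπ2abd : ∀ b1 b2 ω, π2a b1 b2 ω ∈ Set.Icc ε 1) :
    ∫ ω, ((∑ b2 : Bool, d (A1 ω) b2 / π1a (A1 ω) ω * (η2s (A1 ω) b2 ω - η1s (A1 ω) b2 ω)) + (d (A1 ω) (A2 ω) / (π1a (A1 ω) ω * π2a (A1 ω) (A2 ω) ω) * (Y ω - η2s (A1 ω) (A2 ω) ω))) ∂μ = 0 :=
  dr_robust_propensity_direction_general μ Z1 Z2 A1 A2 Y hZ1 hZ2 hA1 hA2 hYint d π1s πJ π2s hπ1s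
    hπ2s η2s hη2meas hη2 η1s hη1meas hη1 C hη2bd hη1bd π1a π2a ε hε hπ1ameas hπ2ameas hπ1abd hπ2abd
end

section
/- Neyman orthogonality (Lemma 1(iii)) in the outcome direction: the Gateaux derivative of E[S0 + S1 + S2] with respect to perturbations of (η1, η2) around the true values (η1*, η2*), holding π1 = π1*, π2 = π2* fixed, vanishes: d/dr |_{r=0} E[ Ψ(θ, η* + r δ_η, π*) ] = 0 for any bounded measurable perturbation δ_η = (δ_{η1}, δ_{η2}). -/
/-!
The score is affine in `r`, `Ψ(η* + r δ) = Ψ(η*) + r H`, with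
`H = Σ d(b₁,b₂) [δ₁ + 1{A₁=b₁}/π₁ (δ₂ - δ₁) - 1{A₁=b₁,A₂=b₂}/(π₁π₂) δ₂]`, so it suffices that
`E[H] = 0`, and then `r ↦ E[Ψ]` is even constant. Since `π₁`, `δ₁` are `Z₁`-measurable,
conditioning on `Z₁` gives `E[1{A₁=b₁} δ₁/π₁] = E[δ₁]`; since `π₁`, `π₂`, `δ₂` are
`(Z₁,Z₂)`-measurable and `P(A₁=b₁, A₂=b₂ | Z₁,Z₂) = πJ π₂` with `πJ = P(A₁=b₁ | Z₁,Z₂)`,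
conditioning on `(Z₁,Z₂)` gives `E[1{A₁=b₁,A₂=b₂} δ₂/(π₁π₂)] = E[πJ δ₂/π₁] = E[1{A₁=b₁} δ₂/π₁]`.
So all terms of `E[H]` cancel.
-/

open MeasureTheory Filter

namespace DoublyRobust

section Indicator

lemma abs_ind_le_one {Ω : Type*} (A : Ω → Bool) (b : Bool) (ω : Ω) : |ind A b ω| ≤ 1 := by
  unfold ind; split <;> simp

variable {Ω : Type*} [MeasurableSpace Ω]

lemma measurable_ind {A : Ω → Bool} (hA : Measurable A) (b : Bool) : Measurable (ind A b) :=
  Measurable.ite (hA (measurableSet_singleton b)) measurable_const measurable_const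

lemma integrable_ind {μ : Measure Ω} [IsFiniteMeasure μ] {A : Ω → Bool} (hA : Measurable A)
    (b : Bool) : Integrable (ind A b) μ :=
  .of_bound (measurable_ind hA b).aestronglyMeasurable 1 (.of_forall (abs_ind_le_one A b))

lemma integrable_ind_mul_ind {μ : Measure Ω} [IsFiniteMeasure μ] {A₁ A₂ : Ω → Bool}
    (hA₁ : Measurable A₁) (hA₂ : Measurable A₂) (b₁ b₂ : Bool) :
    Integrable (fun ω => ind A₁ b₁ ω * ind A₂ b₂ ω) μ :=
  (integrable_ind hA₂ b₂).bdd_mul (measurable_ind hA₁ b₁).aestronglyMeasurable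
    (.of_forall (abs_ind_le_one A₁ b₁))

end Indicator

section Integration

variable {Ω : Type*} {m m₀ : MeasurableSpace Ω} {μ : Measure[m₀] Ω}

lemma _root_.MeasureTheory.AEStronglyMeasurable.of_mul_left₀ {β : Type*} [GroupWithZero β]
    [TopologicalSpace β] [ContinuousMul β] [ContinuousInv₀ β] [TopologicalSpace.MetrizableSpace β]
    {f g : Ω → β} (hf : AEStronglyMeasurable[m] f μ)
    (hfg : AEStronglyMeasurable[m] (fun ω => f ω * g ω) μ) (hf₀ : ∀ᵐ ω ∂μ, f ω ≠ 0) :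
    AEStronglyMeasurable[m] g μ :=
  (hf.inv₀.mul hfg).congr <| by
    filter_upwards [hf₀] with ω hω
    exact inv_mul_cancel_left₀ hω (g ω)

lemma integrable_div_mul {X w p : Ω → ℝ} {C c : ℝ} (hX : Integrable X μ)
    (hw : AEStronglyMeasurable w μ) (hp : AEStronglyMeasurable p μ)
    (hwC : ∀ᵐ ω ∂μ, |w ω| ≤ C) (hc : 0 < c) (hpc : ∀ᵐ ω ∂μ, c ≤ p ω) :
    Integrable (fun ω => w ω / p ω * X ω) μ := by
  refine hX.bdd_mul (c := C / c) (hw.div₀ hp) ?_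
  filter_upwards [hwC, hpc] with ω hwω hpω
  rw [Real.norm_eq_abs, abs_div, abs_of_pos (hc.trans_le hpω)]
  exact div_le_div₀ ((abs_nonneg _).trans hwω) hwω hc hpω

lemma integral_mul_eq_integral_mul_of_ae_eq_condExp [IsFiniteMeasure μ] (hm : m ≤ m₀)
    {f X q : Ω → ℝ} (hf : AEStronglyMeasurable[m] f μ) (hX : Integrable X μ)
    (hfX : Integrable (fun ω => f ω * X ω) μ) (hq : q =ᵐ[μ] μ[X|m]) :
    ∫ ω, f ω * X ω ∂μ = ∫ ω, f ω * q ω ∂μ := by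
  rw [← integral_condExp hm]
  refine integral_congr_ae ((condExp_mul_of_aestronglyMeasurable_left hf hfX hX).trans ?_)
  filter_upwards [hq] with ω hω
  simp [hω]

lemma integral_finsetSum_eq_zero {ι : Type*} {s : Finset ι} {F : ι → Ω → ℝ}
    (hF : ∀ i ∈ s, Integrable (F i) μ) (hF₀ : ∀ i ∈ s, ∫ ω, F i ω ∂μ = 0) :
    ∫ ω, ∑ i ∈ s, F i ω ∂μ = 0 := by
  rw [integral_finsetSum s hF]
  exact Finset.sum_eq_zero hF₀

lemma hasDerivAt_integral_of_eq_add_mul {Ψ : ℝ → Ω → ℝ} {G H : Ω → ℝ}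
    (hΨ : ∀ r ω, Ψ r ω = G ω + r * H ω) (hH : Integrable H μ) (hH₀ : ∫ ω, H ω ∂μ = 0) (x : ℝ) :
    HasDerivAt (fun r => ∫ ω, Ψ r ω ∂μ) 0 x := by
  have hconst : (fun r => ∫ ω, Ψ r ω ∂μ) = fun _ => ∫ ω, G ω ∂μ := by
    funext r
    simp only [hΨ]
    by_cases hG : Integrable G μ
    · rw [integral_add hG (hH.const_mul r), integral_const_mul, hH₀, mul_zero, add_zero]
    · -- neither `G` nor `G + r H` is integrable, so both integrals take the junk value `0`
      have hGH : ¬Integrable (fun ω => G ω + r * H ω) μ := fun h =>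
        hG ((h.sub (hH.const_mul r)).congr (.of_forall fun ω => by simp))
      rw [integral_undef hG, integral_undef hGH]
  rw [hconst]
  exact hasDerivAt_const x _

end Integration

section Score

variable {Ω : Type*}

noncomputable def drScore (d τ : Bool → Bool → ℝ) (A₁ A₂ : Ω → Bool) (Y : Ω → ℝ)
    (π₁ : Bool → Ω → ℝ) (π₂ : Bool → Bool → Ω → ℝ) (η₁ η₂ : Bool → Bool → Ω → ℝ) (ω : Ω) : ℝ :=
  (∑ b₁ : Bool, ∑ b₂ : Bool, d b₁ b₂ * (η₁ b₁ b₂ ω - τ b₁ b₂))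
    + (∑ b₂ : Bool, d (A₁ ω) b₂ / π₁ (A₁ ω) ω * (η₂ (A₁ ω) b₂ ω - η₁ (A₁ ω) b₂ ω))
    + d (A₁ ω) (A₂ ω) / (π₁ (A₁ ω) ω * π₂ (A₁ ω) (A₂ ω) ω) * (Y ω - η₂ (A₁ ω) (A₂ ω) ω)

/-- The coefficient of `d b₁ b₂` in the derivative of `drScore` along `(η₁, η₂) + r • (u, v)`,
with `X₁ = 1{A₁ = b₁}` and `X₂ = 1{A₂ = b₂}`. -/
noncomputable def scoreDeriv (X₁ X₂ p₁ p₂ u v : Ω → ℝ) (ω : Ω) : ℝ :=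
  u ω + X₁ ω / p₁ ω * (v ω - u ω) - X₁ ω * X₂ ω / (p₁ ω * p₂ ω) * v ω

lemma drScore_add_mul (d τ : Bool → Bool → ℝ) (A₁ A₂ : Ω → Bool) (Y : Ω → ℝ)
    (π₁ : Bool → Ω → ℝ) (π₂ : Bool → Bool → Ω → ℝ) (η₁ η₂ δ₁ δ₂ : Bool → Bool → Ω → ℝ)
    (r : ℝ) (ω : Ω) :
    drScore d τ A₁ A₂ Y π₁ π₂ (fun b₁ b₂ ω => η₁ b₁ b₂ ω + r * δ₁ b₁ b₂ ω)
        (fun b₁ b₂ ω => η₂ b₁ b₂ ω + r * δ₂ b₁ b₂ ω) ω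
      = drScore d τ A₁ A₂ Y π₁ π₂ η₁ η₂ ω + r * ∑ b₁ : Bool, ∑ b₂ : Bool, d b₁ b₂ *
          scoreDeriv (ind A₁ b₁) (ind A₂ b₂) (π₁ b₁) (π₂ b₁ b₂) (δ₁ b₁ b₂) (δ₂ b₁ b₂) ω := by
  simp only [drScore, scoreDeriv, ind, Fintype.sum_bool]
  cases A₁ ω <;> cases A₂ ω <;> simp <;> ring

lemma scoreDeriv_eq (X₁ X₂ p₁ p₂ u v : Ω → ℝ) (ω : Ω) :
    scoreDeriv X₁ X₂ p₁ p₂ u v ω = u ω + v ω / p₁ ω * X₁ ω - u ω / p₁ ω * X₁ ω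
      - v ω / (p₁ ω * p₂ ω) * (X₁ ω * X₂ ω) := by
  simp only [scoreDeriv]
  ring

variable {m₀ : MeasurableSpace Ω} {μ : Measure Ω} [IsFiniteMeasure μ]
  {X₁ X₂ p₁ pJ p₂ u v : Ω → ℝ} {C ε : ℝ}

lemma integrable_scoreDeriv (hX₁ : Integrable X₁ μ)
    (hX₁₂ : Integrable (fun ω => X₁ ω * X₂ ω) μ) (hp₁ : AEStronglyMeasurable p₁ μ)
    (hp₂ : AEStronglyMeasurable p₂ μ) (hu : AEStronglyMeasurable u μ)
    (hv : AEStronglyMeasurable v μ) (huC : ∀ᵐ ω ∂μ, |u ω| ≤ C) (hvC : ∀ᵐ ω ∂μ, |v ω| ≤ C)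
    (hε : 0 < ε) (hp₁ε : ∀ᵐ ω ∂μ, ε ≤ p₁ ω) (hp₂ε : ∀ᵐ ω ∂μ, ε ≤ p₂ ω) :
    Integrable (scoreDeriv X₁ X₂ p₁ p₂ u v) μ := by
  have hp₁₂ε : ∀ᵐ ω ∂μ, ε * ε ≤ p₁ ω * p₂ ω := by
    filter_upwards [hp₁ε, hp₂ε] with ω h₁ h₂
    exact mul_le_mul h₁ h₂ hε.le (hε.le.trans h₁)
  rw [funext (scoreDeriv_eq X₁ X₂ p₁ p₂ u v)]
  exact (((Integrable.of_bound hu C huC).add (integrable_div_mul hX₁ hv hp₁ hvC hε hp₁ε)).sub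
    (integrable_div_mul hX₁ hu hp₁ huC hε hp₁ε)).sub
    (integrable_div_mul hX₁₂ hv (hp₁.fun_mul hp₂) hvC (mul_pos hε hε) hp₁₂ε)

lemma integral_scoreDeriv_eq_zero {m₁ m₂ : MeasurableSpace Ω} (hm₁₂ : m₁ ≤ m₂) (hm₂ : m₂ ≤ m₀)
    (hX₁ : Integrable X₁ μ) (hX₁₂ : Integrable (fun ω => X₁ ω * X₂ ω) μ)
    (hp₁m : AEStronglyMeasurable[m₁] p₁ μ) (hp₂m : AEStronglyMeasurable[m₂] p₂ μ)
    (hu : AEStronglyMeasurable[m₁] u μ) (hv : AEStronglyMeasurable[m₂] v μ)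
    (huC : ∀ᵐ ω ∂μ, |u ω| ≤ C) (hvC : ∀ᵐ ω ∂μ, |v ω| ≤ C)
    (hε : 0 < ε) (hp₁ε : ∀ᵐ ω ∂μ, ε ≤ p₁ ω) (hp₂ε : ∀ᵐ ω ∂μ, ε ≤ p₂ ω)
    (hp₁ : p₁ =ᵐ[μ] μ[X₁|m₁]) (hpJ : pJ =ᵐ[μ] μ[X₁|m₂])
    (hp₂ : (fun ω => pJ ω * p₂ ω) =ᵐ[μ] μ[fun ω => X₁ ω * X₂ ω|m₂]) :
    ∫ ω, scoreDeriv X₁ X₂ p₁ p₂ u v ω ∂μ = 0 := by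
  have hm₁ : m₁ ≤ m₀ := hm₁₂.trans hm₂
  have hp₁₂ε : ∀ᵐ ω ∂μ, ε * ε ≤ p₁ ω * p₂ ω := by
    filter_upwards [hp₁ε, hp₂ε] with ω h₁ h₂
    exact mul_le_mul h₁ h₂ hε.le (hε.le.trans h₁)
  have huX₁ := integrable_div_mul hX₁ (hu.mono hm₁) (hp₁m.mono hm₁) huC hε hp₁ε
  have hvX₁ := integrable_div_mul hX₁ (hv.mono hm₂) (hp₁m.mono hm₁) hvC hε hp₁ε
  have hvX₁₂ := integrable_div_mul hX₁₂ (hv.mono hm₂) ((hp₁m.mono hm₁).fun_mul (hp₂m.mono hm₂))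
    hvC (mul_pos hε hε) hp₁₂ε
  have hu₁ : ∫ ω, u ω / p₁ ω * X₁ ω ∂μ = ∫ ω, u ω ∂μ := by
    rw [integral_mul_eq_integral_mul_of_ae_eq_condExp hm₁ (f := fun ω => u ω / p₁ ω)
      (hu.div₀ hp₁m) hX₁ huX₁ hp₁]
    refine integral_congr_ae ?_
    filter_upwards [hp₁ε] with ω h₁
    field_simp [(hε.trans_le h₁).ne']
  have hv₁ : ∫ ω, v ω / p₁ ω * X₁ ω ∂μ = ∫ ω, v ω / p₁ ω * pJ ω ∂μ :=
    integral_mul_eq_integral_mul_of_ae_eq_condExp hm₂ (f := fun ω => v ω / p₁ ω)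
      (hv.div₀ (hp₁m.mono hm₁₂)) hX₁ hvX₁ hpJ
  have hv₁₂ : ∫ ω, v ω / (p₁ ω * p₂ ω) * (X₁ ω * X₂ ω) ∂μ = ∫ ω, v ω / p₁ ω * pJ ω ∂μ := by
    rw [integral_mul_eq_integral_mul_of_ae_eq_condExp hm₂
      (f := fun ω => v ω / (p₁ ω * p₂ ω)) (hv.div₀ ((hp₁m.mono hm₁₂).mul hp₂m)) hX₁₂ hvX₁₂ hp₂]
    refine integral_congr_ae ?_
    filter_upwards [hp₁ε, hp₂ε] with ω h₁ h₂
    field_simp [(hε.trans_le h₁).ne', (hε.trans_le h₂).ne']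
  have hu' := Integrable.of_bound (hu.mono hm₁) C huC
  simp only [scoreDeriv_eq]
  rw [integral_sub (by exact (hu'.fun_add hvX₁).sub huX₁) hvX₁₂,
    integral_sub (hu'.fun_add hvX₁) huX₁, integral_add hu' hvX₁, hu₁, hv₁, hv₁₂]
  ring

end Score

end DoublyRobust

open DoublyRobust

theorem dr_neyman_orthogonality_outcome_general
    {Ω 𝒵₁ 𝒵₂ : Type*} [MeasurableSpace Ω]
    [MeasurableSpace 𝒵₁] [MeasurableSpace 𝒵₂]
    (μ : Measure Ω) [IsProbabilityMeasure μ]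
    (Z1 : Ω → 𝒵₁) (Z2 : Ω → 𝒵₂) (A1 A2 : Ω → Bool) (Y : Ω → ℝ)
    (hZ1 : Measurable Z1) (hZ2 : Measurable Z2)
    (hA1 : Measurable A1) (hA2 : Measurable A2)
    (d : Bool → Bool → ℝ)
    -- true propensity scores: π1s b1 = P(A1=b1|Z1), π2s b1 b2 = P(A2=b2|A1=b1,Z1,Z2),
    -- πJ b1 = P(A1=b1|Z1,Z2)
    (π1s πJ : Bool → Ω → ℝ) (π2s : Bool → Bool → Ω → ℝ) (ε : ℝ) (hε : 0 < ε) 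
    (hπ1s : ∀ b1, π1s b1 =ᵐ[μ] μ[ind A1 b1 | MeasurableSpace.comap Z1 inferInstance])
    (hπJ : ∀ b1, πJ b1 =ᵐ[μ]
      μ[ind A1 b1 | MeasurableSpace.comap (fun ω => (Z1 ω, Z2 ω)) inferInstance])
    (hπ2s : ∀ b1 b2, (fun ω => πJ b1 ω * π2s b1 b2 ω) =ᵐ[μ]
      μ[fun ω => ind A1 b1 ω * ind A2 b2 ω |
        MeasurableSpace.comap (fun ω => (Z1 ω, Z2 ω)) inferInstance])
    (hpos1 : ∀ b1, ∀ᵐ ω ∂μ, ε ≤ π1s b1 ω ∧ π1s b1 ω ≤ 1)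
    (hpos2 : ∀ b1 b2, ∀ᵐ ω ∂μ, ε ≤ π2s b1 b2 ω ∧ π2s b1 b2 ω ≤ 1)
    (hposJ : ∀ b1, ∀ᵐ ω ∂μ, 0 < πJ b1 ω)
    -- true outcome regression η2s b1 b2 = E[Y | A1=b1, A2=b2, Z1, Z2]:
    (η2s : Bool → Bool → Ω → ℝ)
    -- true iterated mean η1s b1 b2 = E[η2s b1 b2 | A1=b1, Z1]:
    (η1s : Bool → Bool → Ω → ℝ)
    (C : ℝ)
    (τ : Bool → Bool → ℝ)
    -- bounded measurable perturbations of (η1, η2):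
    (δ1 δ2 : Bool → Bool → Ω → ℝ)
    (hδ1meas : ∀ b1 b2, Measurable[MeasurableSpace.comap Z1 inferInstance] (δ1 b1 b2))
    (hδ2meas : ∀ b1 b2,
      Measurable[MeasurableSpace.comap (fun ω => (Z1 ω, Z2 ω)) inferInstance] (δ2 b1 b2))
    (hδ1bd : ∀ b1 b2 ω, |δ1 b1 b2 ω| ≤ C) (hδ2bd : ∀ b1 b2 ω, |δ2 b1 b2 ω| ≤ C) :
    HasDerivAt (fun r : ℝ => ∫ ω, ((∑ b1 : Bool, ∑ b2 : Bool, d b1 b2 * ((η1s b1 b2 ω + r * δ1 b1 b2 ω) - τ b1 b2)) + (∑ b2 : Bool, d (A1 ω) b2 / π1s (A1 ω) ω * ((η2s (A1 ω) b2 ω + r * δ2 (A1 ω) b2 ω) - (η1s (A1 ω) b2 ω + r * δ1 (A1 ω) b2 ω))) + (d (A1 ω) (A2 ω) / (π1s (A1 ω) ω * π2s (A1 ω) (A2 ω) ω) * (Y ω - (η2s (A1 ω) (A2 ω) ω + r * δ2 (A1 ω) (A2 ω) ω)))) ∂μ) 0 0 := by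
  have hm₂ := (hZ1.prodMk hZ2).comap_le
  have hm₁₂ : MeasurableSpace.comap Z1 inferInstance
      ≤ MeasurableSpace.comap (fun ω => (Z1 ω, Z2 ω)) inferInstance :=
    (measurable_fst.comp (comap_measurable fun ω => (Z1 ω, Z2 ω))).comap_le
  have hπ₁ b1 := stronglyMeasurable_condExp.aestronglyMeasurable.congr (hπ1s b1).symm
  have hπ₂ b1 b2 :=
    (stronglyMeasurable_condExp.aestronglyMeasurable.congr (hπJ b1).symm).of_mul_left₀
      (stronglyMeasurable_condExp.aestronglyMeasurable.congr (hπ2s b1 b2).symm)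
      ((hposJ b1).mono fun _ h => h.ne')
  have hδ₁ b1 b2 := (hδ1meas b1 b2).stronglyMeasurable.aestronglyMeasurable (μ := μ)
  have hδ₂ b1 b2 := (hδ2meas b1 b2).stronglyMeasurable.aestronglyMeasurable (μ := μ)
  have hε₁ b1 := (hpos1 b1).mono fun _ h => h.1
  have hε₂ b1 b2 := (hpos2 b1 b2).mono fun _ h => h.1
  have hint b1 b2 : Integrable (fun ω => d b1 b2 * scoreDeriv (ind A1 b1) (ind A2 b2) (π1s b1)
      (π2s b1 b2) (δ1 b1 b2) (δ2 b1 b2) ω) μ :=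
    (integrable_scoreDeriv (integrable_ind hA1 b1) (integrable_ind_mul_ind hA1 hA2 b1 b2)
      ((hπ₁ b1).mono (hm₁₂.trans hm₂)) ((hπ₂ b1 b2).mono hm₂)
      ((hδ₁ b1 b2).mono (hm₁₂.trans hm₂)) ((hδ₂ b1 b2).mono hm₂) (.of_forall (hδ1bd b1 b2))
      (.of_forall (hδ2bd b1 b2)) hε (hε₁ b1) (hε₂ b1 b2)).const_mul _
  have hzero b1 b2 : ∫ ω, d b1 b2 * scoreDeriv (ind A1 b1) (ind A2 b2) (π1s b1)
      (π2s b1 b2) (δ1 b1 b2) (δ2 b1 b2) ω ∂μ = 0 := by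
    rw [integral_const_mul, integral_scoreDeriv_eq_zero hm₁₂ hm₂ (integrable_ind hA1 b1)
      (integrable_ind_mul_ind hA1 hA2 b1 b2) (hπ₁ b1) (hπ₂ b1 b2) (hδ₁ b1 b2) (hδ₂ b1 b2)
      (.of_forall (hδ1bd b1 b2)) (.of_forall (hδ2bd b1 b2)) hε (hε₁ b1) (hε₂ b1 b2)
      (hπ1s b1) (hπJ b1) (hπ2s b1 b2), mul_zero]
  refine hasDerivAt_integral_of_eq_add_mul (drScore_add_mul d τ A1 A2 Y π1s π2s η1s η2s δ1 δ2)
    (integrable_finsetSum _ fun b1 _ => integrable_finsetSum _ fun b2 _ => hint b1 b2)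
    (integral_finsetSum_eq_zero (fun b1 _ => integrable_finsetSum _ fun b2 _ => hint b1 b2)
      fun b1 _ => integral_finsetSum_eq_zero (fun b2 _ => hint b1 b2) fun b2 _ => hzero b1 b2) 0

/-- Neyman orthogonality (Lemma 1(iii)) in the outcome direction: the Gateaux
derivative of `E[Ψ(θ, η* + r δ_η, π*)]` in `r` at `r = 0` vanishes, for any bounded
measurable perturbation `δ_η = (δ_η1, δ_η2)` of the iterated conditional means,
holding the propensity scores fixed at their true values. -/
theorem dr_neyman_orthogonality_outcome
    {Ω 𝒵₁ 𝒵₂ : Type*} [MeasurableSpace Ω]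
    [MeasurableSpace 𝒵₁] [MeasurableSpace 𝒵₂]
    (μ : Measure Ω) [IsProbabilityMeasure μ]
    (Z1 : Ω → 𝒵₁) (Z2 : Ω → 𝒵₂) (A1 A2 : Ω → Bool) (Y : Ω → ℝ)
    (hZ1 : Measurable Z1) (hZ2 : Measurable Z2)
    (hA1 : Measurable A1) (hA2 : Measurable A2)
    (hYint : Integrable Y μ)
    (d : Bool → Bool → ℝ)
    -- true propensity scores: π1s b1 = P(A1=b1|Z1), π2s b1 b2 = P(A2=b2|A1=b1,Z1,Z2),
    -- πJ b1 = P(A1=b1|Z1,Z2)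
    (π1s πJ : Bool → Ω → ℝ) (π2s : Bool → Bool → Ω → ℝ) (ε : ℝ) (hε : 0 < ε) 
    (hπ1s : ∀ b1, π1s b1 =ᵐ[μ] μ[ind A1 b1 | MeasurableSpace.comap Z1 inferInstance])
    (hπJ : ∀ b1, πJ b1 =ᵐ[μ]
      μ[ind A1 b1 | MeasurableSpace.comap (fun ω => (Z1 ω, Z2 ω)) inferInstance])
    (hπ2s : ∀ b1 b2, (fun ω => πJ b1 ω * π2s b1 b2 ω) =ᵐ[μ]
      μ[fun ω => ind A1 b1 ω * ind A2 b2 ω |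
        MeasurableSpace.comap (fun ω => (Z1 ω, Z2 ω)) inferInstance])
    (hpos1 : ∀ b1, ∀ᵐ ω ∂μ, ε ≤ π1s b1 ω ∧ π1s b1 ω ≤ 1)
    (hpos2 : ∀ b1 b2, ∀ᵐ ω ∂μ, ε ≤ π2s b1 b2 ω ∧ π2s b1 b2 ω ≤ 1)
    (hposJ : ∀ b1, ∀ᵐ ω ∂μ, 0 < πJ b1 ω)
    -- true outcome regression η2s b1 b2 = E[Y | A1=b1, A2=b2, Z1, Z2]:
    (η2s : Bool → Bool → Ω → ℝ)
    (hη2meas : ∀ b1 b2,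
      Measurable[MeasurableSpace.comap (fun ω => (Z1 ω, Z2 ω)) inferInstance] (η2s b1 b2))
    (hη2 : ∀ b1 b2, (fun ω => πJ b1 ω * π2s b1 b2 ω * η2s b1 b2 ω) =ᵐ[μ]
      μ[fun ω => ind A1 b1 ω * ind A2 b2 ω * Y ω |
        MeasurableSpace.comap (fun ω => (Z1 ω, Z2 ω)) inferInstance])
    -- true iterated mean η1s b1 b2 = E[η2s b1 b2 | A1=b1, Z1]:
    (η1s : Bool → Bool → Ω → ℝ)
    (hη1meas : ∀ b1 b2, Measurable[MeasurableSpace.comap Z1 inferInstance] (η1s b1 b2))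
    (hη1 : ∀ b1 b2, (fun ω => π1s b1 ω * η1s b1 b2 ω) =ᵐ[μ]
      μ[fun ω => ind A1 b1 ω * η2s b1 b2 ω | MeasurableSpace.comap Z1 inferInstance])
    (C : ℝ) (hη2bd : ∀ b1 b2 ω, |η2s b1 b2 ω| ≤ C) (hη1bd : ∀ b1 b2 ω, |η1s b1 b2 ω| ≤ C)
    (τ : Bool → Bool → ℝ)
    -- bounded measurable perturbations of (η1, η2):
    (δ1 δ2 : Bool → Bool → Ω → ℝ)
    (hδ1meas : ∀ b1 b2, Measurable[MeasurableSpace.comap Z1 inferInstance] (δ1 b1 b2))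
    (hδ2meas : ∀ b1 b2,
      Measurable[MeasurableSpace.comap (fun ω => (Z1 ω, Z2 ω)) inferInstance] (δ2 b1 b2))
    (hδ1bd : ∀ b1 b2 ω, |δ1 b1 b2 ω| ≤ C) (hδ2bd : ∀ b1 b2 ω, |δ2 b1 b2 ω| ≤ C) :
    HasDerivAt (fun r : ℝ => ∫ ω, ((∑ b1 : Bool, ∑ b2 : Bool, d b1 b2 * ((η1s b1 b2 ω + r * δ1 b1 b2 ω) - τ b1 b2)) + (∑ b2 : Bool, d (A1 ω) b2 / π1s (A1 ω) ω * ((η2s (A1 ω) b2 ω + r * δ2 (A1 ω) b2 ω) - (η1s (A1 ω) b2 ω + r * δ1 (A1 ω) b2 ω))) + (d (A1 ω) (A2 ω) / (π1s (A1 ω) ω * π2s (A1 ω) (A2 ω) ω) * (Y ω - (η2s (A1 ω) (A2 ω) ω + r * δ2 (A1 ω) (A2 ω) ω)))) ∂μ) 0 0 :=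
  dr_neyman_orthogonality_outcome_general μ Z1 Z2 A1 A2 Y hZ1 hZ2 hA1 hA2 d π1s πJ π2s ε hε hπ1s hπJ
    hπ2s hpos1 hpos2 hposJ η2s η1s C τ δ1 δ2 hδ1meas hδ2meas hδ1bd hδ2bd
end

section
/- Neyman orthogonality of single-period AIPW: with ψ(π,η) = 1{A=a}(Y − η(Z))/π(Z) + η(Z), the Gateaux derivative of E[ψ(π* + rδπ, η* + rδη)] at r = 0 vanishes for all bounded measurable perturbations δπ, δη (with π* + rδπ bounded away from 0 for small r), where π*(Z) = P(A=a|Z) and η*(Z) = E[Y|A=a,Z]. -/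
open MeasureTheory Filter

/-!
Write `πᵣ = π* + r δπ` and `ηᵣ = η* + r δη`. Since `πᵣ⁻¹` and `ηᵣ` are functions of `Z`, the tower
property replaces `1{A=a} (Y − ηᵣ)` under `E[πᵣ⁻¹ · _]` by `E[1{A=a} (Y − ηᵣ) | Z] = −r π* δη`.
Hence `E[ψ(πᵣ, ηᵣ)] = E[η*] + r E[δη (1 − π*/πᵣ)] = E[η*] + r² E[δπ δη / πᵣ]`: the first-order
errors of the two nuisances cancel, and the remainder is quadratic in `r`.
-/

theorem hasDerivAt_zero_of_abs_sub_le_sq {F : ℝ → ℝ} {x K : ℝ}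
    (h : ∀ᶠ y in nhds x, |F y - F x| ≤ K * ‖y - x‖ ^ 2) : HasDerivAt F 0 x := by
  rw [hasDerivAt_iff_isLittleO]
  simp only [smul_zero, sub_zero]
  refine (Asymptotics.IsBigO.of_bound K ?_).trans_isLittleO
    (Asymptotics.isLittleO_pow_sub_sub x one_lt_two)
  filter_upwards [h] with y hy
  simpa using hy

section CondExp

variable {Ω : Type*} {m : MeasurableSpace Ω} [mΩ : MeasurableSpace Ω] {μ : Measure Ω}

theorem integral_mul_condExp_of_aestronglyMeasurable (hm : m ≤ mΩ) [SigmaFinite (μ.trim hm)]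
    {f g : Ω → ℝ} (hf : AEStronglyMeasurable[m] f μ) (hfg : Integrable (f * g) μ)
    (hg : Integrable g μ) : ∫ ω, f ω * g ω ∂μ = ∫ ω, f ω * (μ[g | m]) ω ∂μ :=
  calc ∫ ω, f ω * g ω ∂μ = ∫ ω, (μ[f * g | m]) ω ∂μ := (integral_condExp hm).symm
    _ = ∫ ω, f ω * (μ[g | m]) ω ∂μ :=
      integral_congr_ae (condExp_mul_of_aestronglyMeasurable_left hf hfg hg)

theorem condExp_mul_sub_ae_eq {D Y p η η' : Ω → ℝ} (hp : p =ᵐ[μ] μ[D | m])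
    (hη : (fun ω => p ω * η ω) =ᵐ[μ] μ[fun ω => D ω * Y ω | m])
    (hη' : AEStronglyMeasurable[m] η' μ) (hD : Integrable D μ)
    (hDY : Integrable (fun ω => D ω * Y ω) μ) (hη'D : Integrable (η' * D) μ) :
    μ[fun ω => D ω * (Y ω - η' ω) | m] =ᵐ[μ] fun ω => p ω * (η ω - η' ω) := by
  have hsplit : (fun ω => D ω * (Y ω - η' ω)) = (fun ω => D ω * Y ω) - η' * D := by
    ext ω
    simp only [Pi.sub_apply, Pi.mul_apply]
    ring
  filter_upwards [hsplit ▸ condExp_sub hDY hη'D m,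
    condExp_mul_of_aestronglyMeasurable_left hη' hη'D hD, hp, hη] with ω hsub hpull hpω hηω
  simp only [Pi.sub_apply, Pi.mul_apply] at hsub hpull hpω hηω ⊢
  rw [hsub, hpull, ← hηω, ← hpω]
  ring

theorem abs_integral_mul_div_le [IsProbabilityMeasure μ] {f g h : Ω → ℝ} {C ε : ℝ} (hε : 0 < ε)
    (hf : ∀ᵐ ω ∂μ, |f ω| ≤ C) (hg : ∀ᵐ ω ∂μ, |g ω| ≤ C) (hh : ∀ᵐ ω ∂μ, ε ≤ h ω) :
    |∫ ω, f ω * g ω / h ω ∂μ| ≤ C * C / ε := by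
  have hbd : ∀ᵐ ω ∂μ, ‖f ω * g ω / h ω‖ ≤ C * C / ε := by
    filter_upwards [hf, hg, hh] with ω hfω hgω hhω
    have hC : 0 ≤ C := (abs_nonneg _).trans hfω
    rw [Real.norm_eq_abs, abs_div, abs_mul, abs_of_pos (hε.trans_le hhω)]
    exact div_le_div₀ (mul_nonneg hC hC) (mul_le_mul hfω hgω (abs_nonneg _) hC) hε hhω
  simpa using norm_integral_le_of_norm_le_const hbd

variable [IsFiniteMeasure μ]

theorem integral_aipw_eq (hm : m ≤ mΩ) {D Y πs ηs δπ δη : Ω → ℝ} {c C ε r : ℝ}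
    (hD : AEStronglyMeasurable D μ) (hDbd : ∀ᵐ ω ∂μ, ‖D ω‖ ≤ c) (hY : Integrable Y μ)
    (hπs : πs =ᵐ[μ] μ[D | m])
    (hηs : (fun ω => πs ω * ηs ω) =ᵐ[μ] μ[fun ω => D ω * Y ω | m])
    (hηsm : AEStronglyMeasurable[m] ηs μ) (hηsint : Integrable ηs μ)
    (hδπ : AEStronglyMeasurable[m] δπ μ) (hδπbd : ∀ᵐ ω ∂μ, ‖δπ ω‖ ≤ C)
    (hδη : AEStronglyMeasurable[m] δη μ) (hδηint : Integrable δη μ)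
    (hε : 0 < ε) (hpos : ∀ᵐ ω ∂μ, ε ≤ πs ω + r * δπ ω) :
    ∫ ω, (D ω * (Y ω - (ηs ω + r * δη ω)) / (πs ω + r * δπ ω) + (ηs ω + r * δη ω)) ∂μ
      = ∫ ω, ηs ω ∂μ + r ^ 2 * ∫ ω, δπ ω * δη ω / (πs ω + r * δπ ω) ∂μ := by
  set ηr : Ω → ℝ := fun ω => ηs ω + r * δη ω
  set w : Ω → ℝ := fun ω => (πs ω + r * δπ ω)⁻¹
  have hπsm : AEStronglyMeasurable[m] πs μ :=
    stronglyMeasurable_condExp.aestronglyMeasurable.congr hπs.symm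
  have hwm : AEStronglyMeasurable[m] w μ := (hπsm.add (hδπ.const_mul r)).fun_inv₀
  have hwbd : ∀ᵐ ω ∂μ, ‖w ω‖ ≤ ε⁻¹ := by
    filter_upwards [hpos] with ω hω
    rw [Real.norm_eq_abs, abs_inv, abs_of_pos (hε.trans_le hω)]
    exact inv_anti₀ hε hω
  have hηrm : AEStronglyMeasurable[m] ηr μ := hηsm.add (hδη.const_mul r)
  have hηrint : Integrable ηr μ := hηsint.add (hδηint.const_mul r)
  have hres : Integrable (fun ω => D ω * (Y ω - ηr ω)) μ := (hY.sub hηrint).bdd_mul hD hDbd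
  have hcond := condExp_mul_sub_ae_eq hπs hηs hηrm (.of_bound hD c hDbd)
    (hY.bdd_mul hD hDbd) (hηrint.mul_bdd hD hDbd)
  have hwres : Integrable (fun ω => w ω * (D ω * (Y ω - ηr ω))) μ :=
    hres.bdd_mul (hwm.mono hm) hwbd
  have hwcond : Integrable (fun ω => w ω * (πs ω * (ηs ω - ηr ω))) μ := by
    refine ((integrable_condExp (m := m) (f := fun ω => D ω * (Y ω - ηr ω))).bdd_mul
      (hwm.mono hm) hwbd).congr ?_
    filter_upwards [hcond] with ω hω
    rw [hω]
  have hrem : Integrable (fun ω => δπ ω * δη ω / (πs ω + r * δπ ω)) μ := by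
    refine (hδηint.bdd_mul ((hδπ.mul hwm).mono hm) (c := C * ε⁻¹) ?_).congr ?_
    · filter_upwards [hδπbd, hwbd] with ω h1 h2
      rw [Pi.mul_apply, norm_mul]
      exact mul_le_mul h1 h2 (norm_nonneg _) ((norm_nonneg _).trans h1)
    · exact Eventually.of_forall fun ω => by simp only [Pi.mul_apply, w]; ring
  have htower : ∫ ω, w ω * (D ω * (Y ω - ηr ω)) ∂μ = ∫ ω, w ω * (πs ω * (ηs ω - ηr ω)) ∂μ := by
    rw [integral_mul_condExp_of_aestronglyMeasurable hm hwm hwres hres]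
    refine integral_congr_ae ?_
    filter_upwards [hcond] with ω hω
    rw [hω]
  calc ∫ ω, (D ω * (Y ω - ηr ω) / (πs ω + r * δπ ω) + ηr ω) ∂μ
      = ∫ ω, w ω * (D ω * (Y ω - ηr ω)) ∂μ + ∫ ω, ηr ω ∂μ := by
        rw [← integral_add hwres hηrint]
        simp only [w, div_eq_inv_mul]
    _ = ∫ ω, (w ω * (πs ω * (ηs ω - ηr ω)) + ηr ω) ∂μ := by
        rw [htower, integral_add hwcond hηrint]
    _ = ∫ ω, (ηs ω + r ^ 2 * (δπ ω * δη ω / (πs ω + r * δπ ω))) ∂μ := by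
        refine integral_congr_ae ?_
        filter_upwards [hpos] with ω hω
        have hne : πs ω + r * δπ ω ≠ 0 := (hε.trans_le hω).ne'
        simp only [w, ηr]
        field_simp
        ring
    _ = ∫ ω, ηs ω ∂μ + r ^ 2 * ∫ ω, δπ ω * δη ω / (πs ω + r * δπ ω) ∂μ := by
        rw [integral_add hηsint (hrem.const_mul _), integral_const_mul]

end CondExp

theorem aipw_neyman_orthogonality_general
    {Ω 𝒵 : Type*} [MeasurableSpace Ω] [MeasurableSpace 𝒵]
    (μ : Measure Ω) [IsProbabilityMeasure μ]
    (Z : Ω → 𝒵) (A : Ω → Bool) (Y : Ω → ℝ) (a : Bool)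
    (hZ : Measurable Z) (hA : Measurable A)
    (hY2 : MemLp Y 2 μ)
    -- true nuisance functions:
    (πs ηs : Ω → ℝ)
    (hπs : πs =ᵐ[μ] μ[ind A a | MeasurableSpace.comap Z inferInstance])
    (hηsmeas : Measurable[MeasurableSpace.comap Z inferInstance] ηs)
    (hηs : (fun ω => πs ω * ηs ω) =ᵐ[μ]
      μ[fun ω => ind A a ω * Y ω | MeasurableSpace.comap Z inferInstance])
    (hηsint : MemLp ηs 2 μ)
    -- bounded measurable perturbations:
    (δπ δη : Ω → ℝ) (C : ℝ)
    (hδπmeas : Measurable[MeasurableSpace.comap Z inferInstance] δπ)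
    (hδηmeas : Measurable[MeasurableSpace.comap Z inferInstance] δη)
    (hδπbd : ∀ ω, |δπ ω| ≤ C) (hδηbd : ∀ ω, |δη ω| ≤ C)
    -- the perturbed propensity score stays bounded away from zero for small r:
    (r0 ε' : ℝ) (hr0 : 0 < r0) (hε' : 0 < ε')
    (hstay : ∀ r : ℝ, |r| < r0 → ∀ᵐ ω ∂μ, ε' ≤ πs ω + r * δπ ω) :
    HasDerivAt (fun r : ℝ =>
      ∫ ω, (ind A a ω * (Y ω - (ηs ω + r * δη ω)) / (πs ω + r * δπ ω)
            + (ηs ω + r * δη ω)) ∂μ) 0 0 := by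
  have hm : MeasurableSpace.comap Z inferInstance ≤ ‹MeasurableSpace Ω› := hZ.comap_le
  have hind : AEStronglyMeasurable (ind A a) μ :=
    (Measurable.ite (hA (measurableSet_singleton a)) measurable_const
      measurable_const).aestronglyMeasurable
  have hindbd : ∀ᵐ ω ∂μ, ‖ind A a ω‖ ≤ 1 :=
    Eventually.of_forall fun ω => by unfold ind; split <;> simp
  have hδηint : Integrable δη μ :=
    .of_bound (hδηmeas.mono hm le_rfl).aestronglyMeasurable C (Eventually.of_forall hδηbd)
  have hexpand : ∀ r : ℝ, |r| < r0 →
      ∫ ω, (ind A a ω * (Y ω - (ηs ω + r * δη ω)) / (πs ω + r * δπ ω) + (ηs ω + r * δη ω)) ∂μ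
        = ∫ ω, ηs ω ∂μ + r ^ 2 * ∫ ω, δπ ω * δη ω / (πs ω + r * δπ ω) ∂μ := fun r hr =>
    integral_aipw_eq hm hind hindbd (hY2.integrable one_le_two) hπs hηs
      hηsmeas.stronglyMeasurable.aestronglyMeasurable (hηsint.integrable one_le_two)
      hδπmeas.stronglyMeasurable.aestronglyMeasurable (Eventually.of_forall hδπbd)
      hδηmeas.stronglyMeasurable.aestronglyMeasurable hδηint hε' (hstay r hr)
  refine hasDerivAt_zero_of_abs_sub_le_sq (K := C * C / ε') ?_
  filter_upwards [eventually_abs_sub_lt 0 hr0] with r hr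
  rw [sub_zero] at hr
  simp only [hexpand r hr, hexpand 0 (by simpa using hr0)]
  rw [Real.norm_eq_abs, sub_zero, sq_abs, zero_pow two_ne_zero, zero_mul, add_zero,
    add_sub_cancel_left, abs_mul, abs_of_nonneg (sq_nonneg r), mul_comm]
  exact mul_le_mul_of_nonneg_right (abs_integral_mul_div_le hε' (Eventually.of_forall hδπbd)
    (Eventually.of_forall hδηbd) (hstay r hr)) (sq_nonneg r)

/-- Neyman orthogonality of single-period AIPW: with
`ψ(π,η) = 1{A=a}(Y − η(Z))/π(Z) + η(Z)`, the Gateaux derivative of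
`E[ψ(π* + rδπ, η* + rδη)]` at `r = 0` vanishes for all bounded measurable
perturbations `δπ, δη` (with `π* + rδπ` bounded away from `0` for small `r`),
where `π*(Z) = P(A=a|Z) ∈ [ε,1]` a.s. and `η*(Z) = E[Y|A=a,Z]`. -/
theorem aipw_neyman_orthogonality
    {Ω 𝒵 : Type*} [MeasurableSpace Ω] [MeasurableSpace 𝒵]
    (μ : Measure Ω) [IsProbabilityMeasure μ]
    (Z : Ω → 𝒵) (A : Ω → Bool) (Y : Ω → ℝ) (a : Bool)
    (hZ : Measurable Z) (hA : Measurable A)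
    (hY2 : MemLp Y 2 μ)
    -- true nuisance functions:
    (πs ηs : Ω → ℝ) (ε : ℝ) (hε : 0 < ε)
    (hπs : πs =ᵐ[μ] μ[ind A a | MeasurableSpace.comap Z inferInstance])
    (hπsbd : ∀ᵐ ω ∂μ, πs ω ∈ Set.Icc ε 1)
    (hηsmeas : Measurable[MeasurableSpace.comap Z inferInstance] ηs)
    (hηs : (fun ω => πs ω * ηs ω) =ᵐ[μ]
      μ[fun ω => ind A a ω * Y ω | MeasurableSpace.comap Z inferInstance])
    (hηsint : MemLp ηs 2 μ)
    -- bounded measurable perturbations: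
    (δπ δη : Ω → ℝ) (C : ℝ)
    (hδπmeas : Measurable[MeasurableSpace.comap Z inferInstance] δπ)
    (hδηmeas : Measurable[MeasurableSpace.comap Z inferInstance] δη)
    (hδπbd : ∀ ω, |δπ ω| ≤ C) (hδηbd : ∀ ω, |δη ω| ≤ C)
    -- the perturbed propensity score stays bounded away from zero for small r:
    (r0 ε' : ℝ) (hr0 : 0 < r0) (hε' : 0 < ε')
    (hstay : ∀ r : ℝ, |r| < r0 → ∀ᵐ ω ∂μ, ε' ≤ πs ω + r * δπ ω) :
    HasDerivAt (fun r : ℝ =>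
      ∫ ω, (ind A a ω * (Y ω - (ηs ω + r * δη ω)) / (πs ω + r * δπ ω)
            + (ηs ω + r * δη ω)) ∂μ) 0 0 :=
  aipw_neyman_orthogonality_general μ Z A Y a hZ hA hY2 πs ηs hπs hηsmeas hηs hηsint δπ δη C hδπmeas
    hδηmeas hδπbd hδηbd r0 ε' hr0 hε' hstay
end
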